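/- arXiv:1910.02271 — 2 statements merged into one kernel-verified Lean document; each statement's English description precedes it below -/
import Mathlib

section
/- Let α > 0 and n ≥ 1. Let J_n be the n×n complex tridiagonal matrix with diagonal entries (J_n)_{k,k} = −1 + (2k−1)/n for k = 1,…,n, off-diagonal entries (J_n)_{k,k+1} = (J_n)_{k+1,k} = iα for k = 1,…,n−1, and all other entries zero. Then for every z ∈ ℂ, (iα)^n · Q_n^{(α)}(z) = det(J_n − z·I_n), where I_n is the n×n identity matrix. In particular, the roots of Q_n^{(α)} coincide with the eigenvalues of J_n. -/
open Complex

/-- The Lommel polynomials `R_{n,ν}(x)` defined by the recurrence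
`R_{n+1,ν}(x) = (2(ν+n)/x) R_{n,ν}(x) − R_{n−1,ν}(x)` with `R_{−1,ν}(x) = 0`, `R_{0,ν}(x) = 1`. -/
noncomputable def lommelR (ν x : ℂ) : ℕ → ℂ
  | 0 => 1
  | 1 => 2 * ν / x
  | (n + 2) => 2 * (ν + (n + 1)) / x * lommelR ν x (n + 1) - lommelR ν x n

/-- `Q_n^{(α)}(z) := R_{n,(1−n−nz)/2}(iαn)`. -/
noncomputable def lommelQ (α : ℝ) (n : ℕ) (z : ℂ) : ℂ :=
  lommelR ((1 - (n : ℂ) - (n : ℂ) * z) / 2) (Complex.I * (α : ℂ) * (n : ℂ)) n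

/-- The `n×n` tridiagonal matrix `J_n` (`0`-indexed): diagonal entries
`-1 + (2k+1)/n` for `k = 0,…,n-1` (i.e. `-1 + (2k-1)/n` in `1`-indexed form),
and off-diagonal entries `iα` on the first super- and sub-diagonal. -/
noncomputable def Jmat (α : ℝ) (n : ℕ) : Matrix (Fin n) (Fin n) ℂ :=
  Matrix.of fun k l =>
    if (k : ℕ) = (l : ℕ) then -1 + (2 * ((k : ℕ) : ℂ) + 1) / (n : ℂ)
    else if (k : ℕ) + 1 = (l : ℕ) ∨ (l : ℕ) + 1 = (k : ℕ) then Complex.I * (α : ℂ)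
    else 0

/-
Expanding along the last row, the leading principal minors `D_m` of a tridiagonal matrix with
diagonal `d` and off-diagonal entries `u`, `l` satisfy `D_{m+2} = d_{m+1} D_{m+1} - u_m l_m D_m`.
For `J_n - z I` the off-diagonal entries are `iα` and, with `ν = (1 - n - nz)/2` and `x = iαn`, the
diagonal entries are `-1 + (2m+1)/n - z = iα · 2(ν+m)/x`. Multiplying the Lommel recurrence by
`(iα)^{m+2}` shows that `(iα)^m R_{m,ν}(x)` satisfies the same recurrence with the same initial
values, so `D_n = (iα)^n Q_n^{(α)}(z)`; since `iα ≠ 0`, the two sides vanish together.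
-/

open Matrix

section Tridiagonal

variable {R : Type*} [CommRing R]

def tridiagonal (d u l : ℕ → R) (n : ℕ) : Matrix (Fin n) (Fin n) R :=
  of fun i j =>
    if (i : ℕ) = j then d i
    else if (i : ℕ) + 1 = j then u i
    else if (j : ℕ) + 1 = i then l j
    else 0

theorem submatrix_tridiagonal {m n : ℕ} (d u l : ℕ → R) (f g : Fin m → Fin n)
    (hf : ∀ i, (f i : ℕ) = i) (hg : ∀ j, (g j : ℕ) = j) :
    (tridiagonal d u l n).submatrix f g = tridiagonal d u l m := by
  ext i j
  simp [tridiagonal, hf, hg]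

theorem Matrix.det_succ_of_castSucc_last_eq_zero {m : ℕ}
    (A : Matrix (Fin (m + 1)) (Fin (m + 1)) R) (hA : ∀ i : Fin m, A i.castSucc (Fin.last m) = 0) :
    A.det = A (Fin.last m) (Fin.last m) * (A.submatrix Fin.castSucc Fin.castSucc).det := by
  rw [det_succ_column A (Fin.last m), Fin.sum_univ_castSucc]
  simp [hA, ← two_mul, pow_mul]

theorem det_tridiagonal_one (d u l : ℕ → R) : (tridiagonal d u l 1).det = d 0 := by
  simp [tridiagonal]

theorem det_tridiagonal_submatrix_castSucc_succAbove (d u l : ℕ → R) (k : ℕ) :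
    ((tridiagonal d u l (k + 2)).submatrix Fin.castSucc (Fin.last k).castSucc.succAbove).det =
      u k * (tridiagonal d u l k).det := by
  have hminor : ((tridiagonal d u l (k + 2)).submatrix Fin.castSucc
      (Fin.last k).castSucc.succAbove).submatrix Fin.castSucc Fin.castSucc =
      tridiagonal d u l k := by
    rw [submatrix_submatrix]
    refine submatrix_tridiagonal d u l _ _ (fun _ => rfl) fun j => ?_
    simp [Fin.succAbove_castSucc_of_lt _ _ j.castSucc_lt_last]
  rw [det_succ_of_castSucc_last_eq_zero, hminor]
  · simp [tridiagonal]
  · intro i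
    have := i.isLt
    simp only [submatrix_apply, Fin.succAbove_castSucc_self, tridiagonal, of_apply]
    rw [if_neg, if_neg, if_neg] <;> simp <;> omega

theorem det_tridiagonal_succ_succ (d u l : ℕ → R) (k : ℕ) :
    (tridiagonal d u l (k + 2)).det =
      d (k + 1) * (tridiagonal d u l (k + 1)).det - u k * l k * (tridiagonal d u l k).det := by
  rw [det_succ_row _ (Fin.last (k + 1)), Fin.sum_univ_castSucc, Fin.sum_univ_castSucc,
    Fin.succAbove_last, det_tridiagonal_submatrix_castSucc_succAbove,
    submatrix_tridiagonal d u l Fin.castSucc Fin.castSucc (fun _ => rfl) (fun _ => rfl)]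
  have hfar (i : Fin k) : tridiagonal d u l (k + 2) (Fin.last (k + 1)) i.castSucc.castSucc = 0 := by
    simp only [tridiagonal, of_apply]
    rw [if_neg, if_neg, if_neg] <;> simp <;> omega
  have hsub : tridiagonal d u l (k + 2) (Fin.last (k + 1)) (Fin.last k).castSucc = l k := by
    simp [tridiagonal, show k + 1 + 1 ≠ k by omega]
  have hdiag : tridiagonal d u l (k + 2) (Fin.last (k + 1)) (Fin.last (k + 1)) = d (k + 1) := by
    simp [tridiagonal]
  simp only [hfar, hsub, hdiag, mul_zero, zero_mul, Finset.sum_const_zero, zero_add, Fin.val_last,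
    Fin.val_castSucc, ← two_mul, show k + 1 + k = 2 * k + 1 by ring, pow_succ, pow_mul, neg_one_sq,
    one_pow]
  ring

end Tridiagonal

theorem pow_mul_lommelR_eq_det_tridiagonal (ν x b : ℂ) (m : ℕ) :
    b ^ m * lommelR ν x m =
      (tridiagonal (fun k => b * (2 * (ν + k) / x)) (fun _ => b) (fun _ => b) m).det := by
  induction m using Nat.twoStepInduction with
  | zero => simp [lommelR]
  | one =>
    rw [det_tridiagonal_one, lommelR]
    ring
  | more k ih₀ ih₁ =>
    rw [det_tridiagonal_succ_succ, ← ih₀, ← ih₁, lommelR]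
    push_cast
    ring

theorem Jmat_sub_smul_one_eq_tridiagonal (α : ℝ) (hα : α ≠ 0) (n : ℕ) (z : ℂ) :
    Jmat α n - z • 1 =
      tridiagonal (fun k => I * α * (2 * ((1 - n - n * z) / 2 + k) / (I * α * n)))
        (fun _ => I * α) (fun _ => I * α) n := by
  ext i j
  have hn : (n : ℂ) ≠ 0 := Nat.cast_ne_zero.2 i.pos.ne'
  have hα : (α : ℂ) ≠ 0 := ofReal_ne_zero.2 hα
  have hdiag :
      I * α * (2 * ((1 - n - n * z) / 2 + i) / (I * α * n)) = -1 + (2 * i + 1) / n - z := by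
    field_simp
    ring
  simp only [Jmat, tridiagonal, Matrix.sub_apply, Matrix.smul_apply, one_apply, of_apply,
    Fin.ext_iff, smul_eq_mul]
  split_ifs <;> simp_all

theorem lommelQ_charpoly_general (α : ℝ) (hα : 0 < α) (n : ℕ) :
    (∀ z : ℂ, (Complex.I * (α : ℂ)) ^ n * lommelQ α n z =
      Matrix.det (Jmat α n - z • (1 : Matrix (Fin n) (Fin n) ℂ))) ∧
    (∀ z : ℂ, lommelQ α n z = 0 ↔
      Matrix.det (Jmat α n - z • (1 : Matrix (Fin n) (Fin n) ℂ)) = 0) := by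
  have hdet (z : ℂ) : (I * α) ^ n * lommelQ α n z = (Jmat α n - z • 1).det := by
    rw [Jmat_sub_smul_one_eq_tridiagonal α hα.ne', ← pow_mul_lommelR_eq_det_tridiagonal, lommelQ]
  have hpow : (I * α : ℂ) ^ n ≠ 0 :=
    pow_ne_zero _ (mul_ne_zero I_ne_zero (ofReal_ne_zero.2 hα.ne'))
  refine ⟨hdet, fun z => ?_⟩
  rw [← hdet, mul_eq_zero, or_iff_right hpow]

theorem lommelQ_charpoly (α : ℝ) (hα : 0 < α) (n : ℕ) (hn : 1 ≤ n) :
    (∀ z : ℂ, (Complex.I * (α : ℂ)) ^ n * lommelQ α n z =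
      Matrix.det (Jmat α n - z • (1 : Matrix (Fin n) (Fin n) ℂ))) ∧
    (∀ z : ℂ, lommelQ α n z = 0 ↔
      Matrix.det (Jmat α n - z • (1 : Matrix (Fin n) (Fin n) ℂ)) = 0) :=
  lommelQ_charpoly_general α hα n
end

section
/- Let α > 0 and n ≥ 1. If z₀ ∈ ℂ satisfies Q_n^{(α)}(z₀) = 0, then |Re z₀| ≤ 1 − 1/n and |Im z₀| ≤ 2α·cos(π/(n+1)). Consequently, every root of every Q_n^{(α)} (n ≥ 1) lies in the open rectangle {z ∈ ℂ : |Re z| < 1, |Im z| < 2α}. -/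
open Complex Real

/-!
At a root `z` of `Q_n^{(α)}` the vanishing of `R_{n,ν}` closes the three-term recurrence, so
`n z` is an eigenvalue of the `n × n` tridiagonal matrix `diag(1 - n + 2k) - iαn J`, where `J` is
the adjacency matrix of the path on `n` vertices, with eigenvector `(R_{0,ν}, …, R_{n-1,ν})`.
In the Rayleigh quotient, `Re(n z)` is a weighted average of the diagonal entries, so
`|Re(n z)| ≤ n - 1`, while `Im(n z)` is `-αn` times the Rayleigh quotient of `J`, whose absolute
value is at most the spectral radius `2 cos(π/(n+1))` of the path.
-/

open ComplexConjugate Finset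

theorem two_mul_mul_le_div_mul_sq_add_div_mul_sq {s t : ℝ} (hs : 0 < s) (ht : 0 < t) (a b : ℝ) :
    2 * (a * b) ≤ t / s * a ^ 2 + s / t * b ^ 2 := by
  rw [div_mul_eq_mul_div, div_mul_eq_mul_div, div_add_div _ _ hs.ne' ht.ne',
    le_div_iff₀ (by positivity)]
  nlinarith [sq_nonneg (t * a - s * b), mul_pos hs ht]

theorem sum_two_mul_mul_succ_le_two_cos_mul_sum_sq (n : ℕ) (a : ℕ → ℝ) :
    ∑ k ∈ range (n - 1), 2 * (a k * a (k + 1)) ≤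
      2 * Real.cos (π / (n + 1)) * ∑ k ∈ range n, a k ^ 2 := by
  rcases n with _ | m
  · simp
  -- `t 1, …, t (m + 1)` is the Perron eigenvector of the path on `m + 1` vertices, with eigenvalue
  -- `2 cos θ`; weighting AM-GM by its ratios makes the bound telescope.
  set θ := π / (((m + 1 : ℕ) : ℝ) + 1)
  set t : ℕ → ℝ := fun k => Real.sin (k * θ)
  have hθ : 0 < θ := by positivity
  have ht_pos : ∀ k, 1 ≤ k → k ≤ m + 1 → 0 < t k := by
    intro k hk₁ hk₂
    refine Real.sin_pos_of_pos_of_lt_pi (by positivity) ?_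
    rw [mul_div_assoc', div_lt_iff₀ (by positivity)]
    have : (k : ℝ) < ((m + 1 : ℕ) : ℝ) + 1 := by exact_mod_cast Nat.lt_succ_of_le hk₂
    nlinarith [Real.pi_pos]
  have ht_end : t (m + 2) = 0 := by
    have : ((m + 2 : ℕ) : ℝ) * θ = π := by
      simp only [θ]; field_simp; push_cast; ring
    simp only [t, this, Real.sin_pi]
  have ht_rec : ∀ k, t (k + 2) + t k = 2 * Real.cos θ * t (k + 1) := by
    intro k
    have h₁ : ((k + 2 : ℕ) : ℝ) * θ = (k + 1 : ℕ) * θ + θ := by push_cast; ring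
    have h₂ : (k : ℝ) * θ = (k + 1 : ℕ) * θ - θ := by push_cast; ring
    simp only [t]
    rw [h₁, h₂, Real.sin_add, Real.sin_sub]
    ring
  set f : ℕ → ℝ := fun k => t (k + 2) / t (k + 1) * a k ^ 2
  set g : ℕ → ℝ := fun k => t k / t (k + 1) * a k ^ 2
  calc ∑ k ∈ range (m + 1 - 1), 2 * (a k * a (k + 1))
      ≤ ∑ k ∈ range m, (f k + g (k + 1)) := by
        rw [Nat.add_sub_cancel]
        refine sum_le_sum fun k hk => ?_
        have hk := mem_range.mp hk
        exact two_mul_mul_le_div_mul_sq_add_div_mul_sq (ht_pos (k + 1) (by omega) (by omega))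
          (ht_pos (k + 2) (by omega) (by omega)) _ _
    _ = ∑ k ∈ range (m + 1), (f k + g k) := by
        rw [sum_add_distrib, sum_add_distrib, sum_range_succ f, sum_range_succ' g]
        simp only [f, g, t, ht_end, zero_div, zero_mul, add_zero, CharP.cast_eq_zero, Real.sin_zero]
    _ = ∑ k ∈ range (m + 1), 2 * Real.cos θ * a k ^ 2 := by
        refine sum_congr rfl fun k hk => ?_
        have hk := ht_pos (k + 1) (by omega) (Nat.succ_le_of_lt (mem_range.mp hk))
        simp only [f, g]
        rw [← add_mul, ← add_div, ht_rec, mul_div_assoc, div_self hk.ne', mul_one]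
    _ = 2 * Real.cos θ * ∑ k ∈ range (m + 1), a k ^ 2 := by rw [mul_sum]

theorem abs_two_mul_re_sum_conj_mul_succ_le {N : ℕ} {v : ℕ → ℂ} (hv : v (N + 1) = 0) :
    |2 * (∑ k ∈ range N, conj (v (k + 1)) * v (k + 2)).re| ≤
      2 * Real.cos (π / (N + 1)) * ∑ k ∈ range N, ‖v (k + 1)‖ ^ 2 := by
  rcases N with _ | M
  · simp
  have h_last : ∑ k ∈ range (M + 1), ‖v (k + 1)‖ * ‖v (k + 2)‖ =
      ∑ k ∈ range M, ‖v (k + 1)‖ * ‖v (k + 2)‖ := by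
    rw [sum_range_succ, hv, norm_zero, mul_zero, add_zero]
  calc |2 * (∑ k ∈ range (M + 1), conj (v (k + 1)) * v (k + 2)).re|
      ≤ 2 * ‖∑ k ∈ range (M + 1), conj (v (k + 1)) * v (k + 2)‖ := by
        rw [abs_mul, abs_two]
        exact mul_le_mul_of_nonneg_left (abs_re_le_norm _) zero_le_two
    _ ≤ 2 * ∑ k ∈ range (M + 1), ‖v (k + 1)‖ * ‖v (k + 2)‖ := by
        gcongr
        refine (norm_sum_le _ _).trans_eq (sum_congr rfl fun k _ => ?_)
        rw [norm_mul, Complex.norm_conj]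
    _ = ∑ k ∈ range (M + 1 - 1), 2 * (‖v (k + 1)‖ * ‖v (k + 1 + 1)‖) := by
        rw [h_last, mul_sum, Nat.add_sub_cancel]
    _ ≤ _ := sum_two_mul_mul_succ_le_two_cos_mul_sum_sq (M + 1) fun k => ‖v (k + 1)‖

theorem sum_conj_mul_pred_eq_conj_sum {N : ℕ} {v : ℕ → ℂ} (hv₀ : v 0 = 0)
    (hv : v (N + 1) = 0) :
    ∑ k ∈ range N, conj (v (k + 1)) * v k = conj (∑ k ∈ range N, conj (v (k + 1)) * v (k + 2)) := by
  have h_top : ∑ k ∈ range (N + 1), conj (v (k + 1)) * v k =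
      ∑ k ∈ range N, conj (v (k + 1)) * v k := by
    rw [sum_range_succ, hv, map_zero, zero_mul, add_zero]
  rw [← h_top, sum_range_succ', hv₀, mul_zero, add_zero, map_sum]
  exact sum_congr rfl fun k _ => by rw [map_mul, conj_conj, mul_comm]

/-- `v 1, …, v N` is an eigenvector, with eigenvalue `μ`, of the tridiagonal `N × N` matrix with
diagonal `d 0, …, d (N - 1)` and all off-diagonal entries `-x`; the boundary values `v 0` and
`v (N + 1)` are zero, so that one recurrence covers every row. -/
structure IsTridiagonalEigen (N : ℕ) (d : ℕ → ℝ) (x μ : ℂ) (v : ℕ → ℂ) : Prop where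
  zero_left : v 0 = 0
  zero_right : v (N + 1) = 0
  eq : ∀ k < N, μ * v (k + 1) = d k * v (k + 1) - x * (v k + v (k + 2))

namespace IsTridiagonalEigen

variable {N : ℕ} {d : ℕ → ℝ} {x μ : ℂ} {v : ℕ → ℂ}

theorem rayleigh (h : IsTridiagonalEigen N d x μ v) :
    μ * (∑ k ∈ range N, ‖v (k + 1)‖ ^ 2 : ℝ) =
      (∑ k ∈ range N, d k * ‖v (k + 1)‖ ^ 2 : ℝ) -
        x * (2 * (∑ k ∈ range N, conj (v (k + 1)) * v (k + 2)).re : ℝ) := by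
  set W := ∑ k ∈ range N, conj (v (k + 1)) * v (k + 2)
  have hW : ((2 * W.re : ℝ) : ℂ) = ∑ k ∈ range N, conj (v (k + 1)) * (v k + v (k + 2)) := by
    rw [← add_conj, ← sum_conj_mul_pred_eq_conj_sum h.zero_left h.zero_right, ← sum_add_distrib]
    exact sum_congr rfl fun k _ => by ring
  rw [hW]
  push_cast
  rw [mul_sum, mul_sum, ← sum_sub_distrib]
  refine sum_congr rfl fun k hk => ?_
  rw [← conj_mul']
  linear_combination conj (v (k + 1)) * h.eq k (mem_range.mp hk)

theorem abs_re_le (h : IsTridiagonalEigen N d x μ v) (hv : 0 < ∑ k ∈ range N, ‖v (k + 1)‖ ^ 2)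
    (hx : x.re = 0) {D : ℝ} (hd : ∀ k < N, |d k| ≤ D) : |μ.re| ≤ D := by
  have hre := congrArg re h.rayleigh
  simp only [mul_re, ofReal_re, ofReal_im, hx, sub_re, zero_mul, mul_zero, sub_zero] at hre
  refine le_of_mul_le_mul_right ?_ hv
  calc |μ.re| * ∑ k ∈ range N, ‖v (k + 1)‖ ^ 2
      = |∑ k ∈ range N, d k * ‖v (k + 1)‖ ^ 2| := by rw [← hre, abs_mul, abs_of_pos hv]
    _ ≤ ∑ k ∈ range N, |d k| * ‖v (k + 1)‖ ^ 2 := by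
        refine (abs_sum_le_sum_abs _ _).trans_eq (sum_congr rfl fun k _ => ?_)
        rw [abs_mul, abs_of_nonneg (sq_nonneg ‖v (k + 1)‖)]
    _ ≤ D * ∑ k ∈ range N, ‖v (k + 1)‖ ^ 2 := by
        rw [mul_sum]
        exact sum_le_sum fun k hk => mul_le_mul_of_nonneg_right (hd k (mem_range.mp hk))
          (sq_nonneg _)

theorem abs_im_le (h : IsTridiagonalEigen N d x μ v) (hv : 0 < ∑ k ∈ range N, ‖v (k + 1)‖ ^ 2) :
    |μ.im| ≤ |x.im| * (2 * Real.cos (π / (N + 1))) := by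
  have him := congrArg im h.rayleigh
  simp only [mul_im, ofReal_re, ofReal_im, sub_im, mul_zero, zero_sub, zero_add] at him
  refine le_of_mul_le_mul_right ?_ hv
  calc |μ.im| * ∑ k ∈ range N, ‖v (k + 1)‖ ^ 2
      = |x.im| * |2 * (∑ k ∈ range N, conj (v (k + 1)) * v (k + 2)).re| := by
        rw [← abs_of_pos hv, ← abs_mul, him, abs_neg, abs_mul]
    _ ≤ |x.im| * (2 * Real.cos (π / (N + 1)) * ∑ k ∈ range N, ‖v (k + 1)‖ ^ 2) :=
        mul_le_mul_of_nonneg_left (abs_two_mul_re_sum_conj_mul_succ_le h.zero_right)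
          (abs_nonneg _)
    _ = _ := by ring

end IsTridiagonalEigen

/-- `lommelSeq ν x k = R_{k-1,ν}(x)`, with the initial value `R_{-1,ν}(x) = 0` at `k = 0`. -/
noncomputable def lommelSeq (ν x : ℂ) : ℕ → ℂ
  | 0 => 0
  | k + 1 => lommelR ν x k

theorem lommelSeq_recurrence {ν x : ℂ} (hx : x ≠ 0) (k : ℕ) :
    x * (lommelSeq ν x k + lommelSeq ν x (k + 2)) = 2 * (ν + k) * lommelSeq ν x (k + 1) := by
  rcases k with _ | k <;> simp only [lommelSeq, lommelR] <;> field_simp <;> push_cast <;> ring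

theorem isTridiagonalEigen_of_lommelQ_eq_zero {α : ℝ} {n : ℕ} {z : ℂ} (hα : α ≠ 0) (hn : n ≠ 0)
    (hz : lommelQ α n z = 0) :
    IsTridiagonalEigen n (fun k => 1 - n + 2 * k) (I * α * n) (n * z)
      (lommelSeq ((1 - n - n * z) / 2) (I * α * n)) where
  zero_left := rfl
  zero_right := hz
  eq k _ := by
    have hx : I * α * n ≠ 0 := by simp [hα, hn]
    push_cast
    linear_combination lommelSeq_recurrence (ν := (1 - n - n * z) / 2) hx k

theorem lommelQ_root_bound {α : ℝ} (hα : 0 < α) {n : ℕ} (hn : 1 ≤ n) {z : ℂ}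
    (hz : lommelQ α n z = 0) :
    |z.re| ≤ 1 - 1 / n ∧ |z.im| ≤ 2 * α * Real.cos (π / (n + 1)) := by
  have hn₀ : (0 : ℝ) < n := by exact_mod_cast hn
  have h := isTridiagonalEigen_of_lommelQ_eq_zero hα.ne' (by omega) hz
  have hv : 0 < ∑ k ∈ range n, ‖lommelSeq ((1 - n - n * z) / 2) (I * α * n) (k + 1)‖ ^ 2 := by
    refine lt_of_lt_of_le ?_ (single_le_sum (fun k _ => sq_nonneg _) (mem_range.mpr hn))
    simp [lommelSeq, lommelR]
  have hre := h.abs_re_le hv (by simp) (D := n - 1) fun k hk => by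
    have hk : (k : ℝ) + 1 ≤ n := by exact_mod_cast hk
    rw [abs_le]
    constructor <;> linarith [(Nat.cast_nonneg k : (0 : ℝ) ≤ k)]
  have him := h.abs_im_le hv
  simp only [mul_re, mul_im, natCast_re, natCast_im, I_re, I_im, ofReal_re, ofReal_im, zero_mul,
    sub_zero, mul_zero, one_mul, zero_add, add_zero, abs_mul, Nat.abs_cast, abs_of_pos hα] at hre him
  constructor
  · rw [one_sub_div hn₀.ne', le_div_iff₀ hn₀]
    linarith
  · exact le_of_mul_le_mul_left (by linarith) hn₀

theorem lommelQ_root_localization (α : ℝ) (hα : 0 < α) :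
    (∀ n : ℕ, 1 ≤ n → ∀ z₀ : ℂ, lommelQ α n z₀ = 0 →
      |z₀.re| ≤ 1 - 1 / (n : ℝ) ∧ |z₀.im| ≤ 2 * α * Real.cos (Real.pi / ((n : ℝ) + 1))) ∧
    (∀ n : ℕ, 1 ≤ n → ∀ z : ℂ, lommelQ α n z = 0 →
      |z.re| < 1 ∧ |z.im| < 2 * α) := by
  refine ⟨fun n hn z hz => lommelQ_root_bound hα hn hz, fun n hn z hz => ?_⟩
  obtain ⟨hre, him⟩ := lommelQ_root_bound hα hn hz
  have hn₀ : (0 : ℝ) < n := by exact_mod_cast hn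
  have hcos : Real.cos (π / (n + 1)) < 1 := by
    simpa using Real.cos_lt_cos_of_nonneg_of_le_pi le_rfl
      (div_le_self Real.pi_pos.le (by linarith)) (by positivity)
  constructor
  · linarith [one_div_pos.mpr hn₀]
  · nlinarith
end
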